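/- arXiv:2602.23066 — 5 statements merged into one kernel-verified Lean document; each statement's English description precedes it below -/
import Mathlib

section
/- Let Γ be a finite group and let {Γ₁} ∪ 𝒜 be a nontrivial Frobenius partition of Γ. Then there exists a subgroup A ∈ 𝒜 such that Γ is the internal semidirect product of Γ₁ and A, i.e., Γ₁ ∩ A = {1} and Γ₁A = Γ (the subgroups Γ₁ and A are complementary in Γ). -/
/-- The conjugate subgroup `g⁻¹ A g` of a subgroup `A`. -/
def ConjSubgroup {Γ : Type*} [Group Γ] (g : Γ) (A : Subgroup Γ) : Subgroup Γ :=
  Subgroup.map (MulAut.conj g⁻¹).toMonoidHom A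

/-- A subgroup `A` is malnormal if for every `g ∉ A` the intersection `A ∩ g⁻¹Ag` is trivial. -/
def Malnormal {Γ : Type*} [Group Γ] (A : Subgroup Γ) : Prop :=
  ∀ g : Γ, g ∉ A → A ⊓ ConjSubgroup g A = ⊥

/-- A collection of subgroups is a partition of the group if every non-identity element
lies in exactly one subgroup of the collection. -/
def IsGroupPartition {Γ : Type*} [Group Γ] (P : Set (Subgroup Γ)) : Prop :=
  ∀ x : Γ, x ≠ 1 → ∃! A : Subgroup Γ, A ∈ P ∧ x ∈ A

/-- `{Γ₁} ∪ 𝒜` is a Frobenius partition of `Γ` if it is a partition of `Γ`, `Γ₁` is normal,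
every `A ∈ 𝒜` is malnormal, and `𝒜` is closed under conjugation. -/
structure IsFrobeniusPartition {Γ : Type*} [Group Γ] (Γ₁ : Subgroup Γ)
    (𝒜 : Set (Subgroup Γ)) : Prop where
  normal : Γ₁.Normal
  partition : IsGroupPartition (insert Γ₁ 𝒜)
  malnormal : ∀ A ∈ 𝒜, Malnormal A
  conj_mem : ∀ A ∈ 𝒜, ∀ g : Γ, ConjSubgroup g A ∈ 𝒜

/-- A partition is nontrivial if it contains at least two nontrivial subgroups. -/
def NontrivialGroupPartition {Γ : Type*} [Group Γ] (P : Set (Subgroup Γ)) : Prop :=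
  ∃ A ∈ P, ∃ B ∈ P, A ≠ B ∧ A ≠ ⊥ ∧ B ≠ ⊥

section FrobeniusHelpers

variable {Γ : Type*} [Group Γ]

lemma mem_conjSubgroup' {g x : Γ} {A : Subgroup Γ} :
    x ∈ ConjSubgroup g A ↔ g * x * g⁻¹ ∈ A := by
  simp only [ConjSubgroup, Subgroup.mem_map, MulEquiv.coe_toMonoidHom, MulAut.conj_apply,
    inv_inv]
  constructor
  · rintro ⟨a, ha, rfl⟩
    convert ha using 1
    group
  · intro h
    exact ⟨g * x * g⁻¹, h, by group⟩

lemma conjSubgroup_conjSubgroup' (g h : Γ) (A : Subgroup Γ) :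
    ConjSubgroup h (ConjSubgroup g A) = ConjSubgroup (g * h) A := by
  ext x
  simp only [mem_conjSubgroup', mul_inv_rev]
  constructor <;> intro hx <;> convert hx using 1 <;> group

lemma conjSubgroup_one' (A : Subgroup Γ) : ConjSubgroup 1 A = A := by
  ext x
  simp [mem_conjSubgroup']

lemma conjSubgroup_of_normal' {Γ₁ : Subgroup Γ} (h : Γ₁.Normal) (g : Γ) :
    ConjSubgroup g Γ₁ = Γ₁ := by
  ext x
  simp only [mem_conjSubgroup']
  constructor
  · intro hx
    have := h.conj_mem _ hx g⁻¹
    simpa [mul_assoc] using this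
  · intro hx
    exact h.conj_mem _ hx g

/-- If a conjugate of `C` equals a normal subgroup `Γ₁`, then `C = Γ₁`. -/
lemma eq_of_conjSubgroup_eq_normal {Γ₁ C : Subgroup Γ} (h : Γ₁.Normal) {g : Γ}
    (hg : ConjSubgroup g C = Γ₁) : C = Γ₁ := by
  have := congrArg (ConjSubgroup g⁻¹) hg
  rwa [conjSubgroup_conjSubgroup', mul_inv_cancel, conjSubgroup_one',
    conjSubgroup_of_normal' h] at this

lemma partition_eq_one' {P : Set (Subgroup Γ)} (hP : IsGroupPartition P)
    {A B : Subgroup Γ} (hA : A ∈ P) (hB : B ∈ P) (hAB : A ≠ B) {x : Γ}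
    (hxA : x ∈ A) (hxB : x ∈ B) : x = 1 := by
  by_contra hx
  obtain ⟨C, -, hC⟩ := hP x hx
  exact hAB ((hC A ⟨hA, hxA⟩).trans (hC B ⟨hB, hxB⟩).symm)

/-- The union of the conjugates of a malnormal subgroup, minus the identity, has
cardinality `[Γ : C] * (|C| - 1)`. -/
lemma ncard_conjUnion {Γ : Type*} [Group Γ] [Finite Γ] {C : Subgroup Γ}
    (hmal : Malnormal C) :
    (⋃ g : Γ, ((ConjSubgroup g C : Set Γ) \ {1})).ncard
      = Nat.card (Γ ⧸ C) * (Nat.card C - 1) := by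
  classical
  set U : Set Γ := ⋃ g : Γ, ((ConjSubgroup g C : Set Γ) \ {1}) with hU
  set f : (Γ ⧸ C) × {c : C // (c : Γ) ≠ 1} → Γ :=
    fun p => p.1.out * (p.2.1 : Γ) * p.1.out⁻¹ with hf
  have hinj : Function.Injective f := by
    rintro ⟨q, c, hc⟩ ⟨q', c', hc'⟩ h
    simp only [hf] at h
    set g : Γ := q'.out⁻¹ * q.out with hg
    have hmem : (c : Γ) ∈ ConjSubgroup g C := by
      rw [mem_conjSubgroup']
      have : g * (c : Γ) * g⁻¹ = (c' : Γ) := by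
        rw [hg]
        have : (c : Γ) = q.out⁻¹ * (q'.out * (c' : Γ) * q'.out⁻¹) * q.out := by
          rw [← h]; group
        rw [this]; group
      rw [this]; exact c'.2
    have hgC : g ∈ C := by
      by_contra hgC
      have := hmal g hgC
      have : (c : Γ) ∈ (⊥ : Subgroup Γ) := this ▸ Subgroup.mem_inf.2 ⟨c.2, hmem⟩
      exact hc (by simpa using this)
    have hq : q = q' := by
      rw [← QuotientGroup.out_eq' q, ← QuotientGroup.out_eq' q']
      exact (QuotientGroup.eq.2 (by simpa [hg] using hgC)).symm
    subst hq
    have : (c : Γ) = (c' : Γ) := mul_left_cancel (mul_right_cancel h)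
    exact Prod.ext rfl (Subtype.ext (Subtype.ext this))
  have hrange : Set.range f = U := by
    ext x
    constructor
    · rintro ⟨⟨q, c, hc⟩, rfl⟩
      refine Set.mem_iUnion.2 ⟨q.out⁻¹, ?_, ?_⟩
      · rw [SetLike.mem_coe, mem_conjSubgroup']
        simpa [hf, mul_assoc] using c.2
      · simp only [hf, Set.mem_singleton_iff]
        intro h1
        apply hc
        have : (c : Γ) = q.out⁻¹ * 1 * q.out := by
          rw [← h1]; group
        simpa using this
    · intro hx
      obtain ⟨g, hg1, hg2⟩ := Set.mem_iUnion.1 hx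
      rw [SetLike.mem_coe, mem_conjSubgroup'] at hg1
      set q : Γ ⧸ C := QuotientGroup.mk g⁻¹ with hq
      have hout : g * q.out ∈ C := by
        have : (QuotientGroup.mk g⁻¹ : Γ ⧸ C) = QuotientGroup.mk q.out :=
          (QuotientGroup.out_eq' q).symm
        simpa using QuotientGroup.eq.1 this
      have hcC : q.out⁻¹ * x * q.out ∈ C := by
        have : q.out⁻¹ * x * q.out = (g * q.out)⁻¹ * (g * x * g⁻¹) * (g * q.out) := by
          group
        rw [this]
        exact C.mul_mem (C.mul_mem (C.inv_mem hout) hg1) hout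
      have hcne : q.out⁻¹ * x * q.out ≠ 1 := by
        intro h1
        apply hg2
        have : x = q.out * 1 * q.out⁻¹ := by rw [← h1]; group
        simpa using this
      exact ⟨⟨q, ⟨⟨_, hcC⟩, hcne⟩⟩, by simp [hf]; group⟩
  have hcard : U.ncard = Nat.card ((Γ ⧸ C) × {c : C // (c : Γ) ≠ 1}) := by
    rw [← hrange, ← Nat.card_coe_set_eq, Nat.card_range_of_injective hinj]
  rw [hcard, Nat.card_prod]
  congr 1
  have : {c : C // (c : Γ) ≠ 1} ≃ ((Set.univ \ {1} : Set C) : Set C) := by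
    apply Equiv.subtypeEquivRight
    intro c
    simp [OneMemClass.coe_eq_one, eq_comm]
  rw [Nat.card_congr this, Nat.card_coe_set_eq,
    Set.ncard_diff_singleton_of_mem (Set.mem_univ _), Set.ncard_univ]

end FrobeniusHelpers

open Pointwise in
/-- For a nontrivial Frobenius partition `{Γ₁} ∪ 𝒜` of a finite group `Γ`, there is a subgroup
`A ∈ 𝒜` with `Γ₁ ∩ A = {1}` and `Γ₁A = Γ`, i.e. `Γ` is the internal semidirect product
of `Γ₁` and `A`. -/
theorem exists_complement {Γ : Type*} [Group Γ] [Finite Γ]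
    (Γ₁ : Subgroup Γ) (𝒜 : Set (Subgroup Γ)) (hF : IsFrobeniusPartition Γ₁ 𝒜)
    (hnt : NontrivialGroupPartition (insert Γ₁ 𝒜)) :
    ∃ A ∈ 𝒜, Γ₁ ⊓ A = ⊥ ∧ (Γ₁ : Set Γ) * (A : Set Γ) = Set.univ := by
  classical
  obtain ⟨A₀, hA₀, B₀, hB₀, hne, hA₀b, hB₀b⟩ := hnt
  obtain ⟨A, hA𝒜, hAbot, hAne⟩ : ∃ A ∈ 𝒜, A ≠ ⊥ ∧ A ≠ Γ₁ := by
    rcases eq_or_ne A₀ Γ₁ with rfl | h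
    · have hB𝒜 : B₀ ∈ 𝒜 := by
        rcases Set.mem_insert_iff.1 hB₀ with h' | h'
        · exact absurd h'.symm hne
        · exact h'
      exact ⟨B₀, hB𝒜, hB₀b, fun h => hne h.symm⟩
    · have hA𝒜 : A₀ ∈ 𝒜 := by
        rcases Set.mem_insert_iff.1 hA₀ with h' | h'
        · exact absurd h' h
        · exact h'
      exact ⟨A₀, hA𝒜, hA₀b, h⟩
  have hΓ₁P : Γ₁ ∈ insert Γ₁ 𝒜 := Set.mem_insert _ _
  have hmemP : ∀ B ∈ 𝒜, B ∈ insert Γ₁ 𝒜 := fun B hB => Set.mem_insert_of_mem _ hB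
  -- the "union of conjugates minus 1" sets
  set U : Subgroup Γ → Set Γ := fun C => ⋃ g : Γ, ((ConjSubgroup g C : Set Γ) \ {1})
    with hUdef
  -- Γ₁ is disjoint from the union of conjugates of any C ∈ 𝒜 with C ≠ Γ₁
  have hdisj₁ : ∀ C ∈ 𝒜, C ≠ Γ₁ → Disjoint (Γ₁ : Set Γ) (U C) := by
    intro C hC hCne
    rw [Set.disjoint_left]
    rintro x hx hxU
    obtain ⟨g, hg⟩ := Set.mem_iUnion.1 hxU
    refine hg.2 (Set.mem_singleton_iff.2 ?_)
    refine partition_eq_one' hF.partition hΓ₁P (hmemP _ (hF.conj_mem C hC g)) ?_ hx hg.1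
    intro hEq
    exact hCne (eq_of_conjSubgroup_eq_normal hF.normal hEq.symm)
  -- conjugate unions of non-conjugate subgroups are disjoint
  have hdisjU : ∀ B ∈ 𝒜, (¬ ∃ g, B = ConjSubgroup g A) → Disjoint (U A) (U B) := by
    intro B hB hnotconj
    rw [Set.disjoint_left]
    rintro x hxA hxB
    obtain ⟨g, hg⟩ := Set.mem_iUnion.1 hxA
    obtain ⟨h, hh⟩ := Set.mem_iUnion.1 hxB
    rcases eq_or_ne (ConjSubgroup g A) (ConjSubgroup h B) with hEq | hNe
    · apply hnotconj
      refine ⟨g * h⁻¹, ?_⟩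
      have := congrArg (ConjSubgroup h⁻¹) hEq
      rw [conjSubgroup_conjSubgroup', conjSubgroup_conjSubgroup', mul_inv_cancel,
        conjSubgroup_one'] at this
      exact this.symm
    · exact hg.2 (Set.mem_singleton_iff.2
        (partition_eq_one' hF.partition (hmemP _ (hF.conj_mem A hA𝒜 g))
          (hmemP _ (hF.conj_mem B hB h)) hNe hg.1 hh.1))
  -- cardinality facts
  have hm1 : ((Γ₁ : Set Γ)).ncard = Nat.card Γ₁ := by
    rw [← Nat.card_coe_set_eq, SetLike.coe_sort_coe]
  have hlagA : Nat.card (Γ ⧸ A) * Nat.card A = Nat.card Γ :=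
    (Subgroup.card_eq_card_quotient_mul_card_subgroup A).symm
  have haA : 2 ≤ Nat.card A := (Subgroup.one_lt_card_iff_ne_bot (H := A)).2 hAbot
  have hmpos : 1 ≤ Nat.card Γ₁ := Nat.one_le_iff_ne_zero.2 Nat.card_pos.ne'
  have hcardUA : (U A).ncard = Nat.card (Γ ⧸ A) * (Nat.card A - 1) :=
    ncard_conjUnion (hF.malnormal A hA𝒜)
  -- every element outside Γ₁ lies in a conjugate of A
  have hcover : ∀ x : Γ, x ∉ Γ₁ → x ∈ U A := by
    intro x hx
    have hx1 : x ≠ 1 := fun h => hx (h ▸ Γ₁.one_mem)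
    obtain ⟨B, ⟨hBmem, hxB⟩, -⟩ := hF.partition x hx1
    have hB𝒜 : B ∈ 𝒜 := by
      rcases Set.mem_insert_iff.1 hBmem with rfl | h'
      · exact absurd hxB hx
      · exact h'
    by_cases hBA : ∃ g, B = ConjSubgroup g A
    · obtain ⟨g, rfl⟩ := hBA
      exact Set.mem_iUnion.2 ⟨g, hxB, fun h => hx1 h⟩
    · exfalso
      have hBne : B ≠ Γ₁ := fun h => hx (h ▸ hxB)
      have hBbot : B ≠ ⊥ := by
        intro h
        rw [h, Subgroup.mem_bot] at hxB
        exact hx1 hxB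
      have hlagB : Nat.card (Γ ⧸ B) * Nat.card B = Nat.card Γ :=
        (Subgroup.card_eq_card_quotient_mul_card_subgroup B).symm
      have haB : 2 ≤ Nat.card B := (Subgroup.one_lt_card_iff_ne_bot (H := B)).2 hBbot
      have hcardUB : (U B).ncard = Nat.card (Γ ⧸ B) * (Nat.card B - 1) :=
        ncard_conjUnion (hF.malnormal B hB𝒜)
      have hd1 := hdisj₁ A hA𝒜 hAne
      have hd2 := hdisj₁ B hB𝒜 hBne
      have hd3 := hdisjU B hB𝒜 hBA
      have hUnion : ((Γ₁ : Set Γ) ∪ U A ∪ U B).ncard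
          = (Γ₁ : Set Γ).ncard + (U A).ncard + (U B).ncard := by
        rw [Set.ncard_union_eq (Disjoint.union_left hd2 hd3) ((Set.toFinite _).union
          (Set.toFinite _)) (Set.toFinite _),
          Set.ncard_union_eq hd1 (Set.toFinite _) (Set.toFinite _)]
      have hle : ((Γ₁ : Set Γ) ∪ U A ∪ U B).ncard ≤ Nat.card Γ := by
        rw [← Set.ncard_univ]
        exact Set.ncard_le_ncard (Set.subset_univ _) Set.finite_univ
      rw [hUnion, hm1, hcardUA, hcardUB] at hle
      -- arithmetic contradiction
      have e1 : Nat.card (Γ ⧸ A) * (Nat.card A - 1) + Nat.card (Γ ⧸ A) = Nat.card Γ := by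
        have h' : Nat.card A - 1 + 1 = Nat.card A := by omega
        calc Nat.card (Γ ⧸ A) * (Nat.card A - 1) + Nat.card (Γ ⧸ A)
            = Nat.card (Γ ⧸ A) * ((Nat.card A - 1) + 1) := by ring
          _ = Nat.card (Γ ⧸ A) * Nat.card A := by rw [h']
          _ = Nat.card Γ := hlagA
      have e2 : Nat.card (Γ ⧸ B) * (Nat.card B - 1) + Nat.card (Γ ⧸ B) = Nat.card Γ := by
        have h' : Nat.card B - 1 + 1 = Nat.card B := by omega
        calc Nat.card (Γ ⧸ B) * (Nat.card B - 1) + Nat.card (Γ ⧸ B)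
            = Nat.card (Γ ⧸ B) * ((Nat.card B - 1) + 1) := by ring
          _ = Nat.card (Γ ⧸ B) * Nat.card B := by rw [h']
          _ = Nat.card Γ := hlagB
      have e3 : 2 * Nat.card (Γ ⧸ A) ≤ Nat.card Γ := by
        rw [← hlagA, mul_comm]
        exact Nat.mul_le_mul_left _ haA
      have e4 : 2 * Nat.card (Γ ⧸ B) ≤ Nat.card Γ := by
        rw [← hlagB, mul_comm]
        exact Nat.mul_le_mul_left _ haB
      omega
  -- hence Γ = Γ₁ ∪ (union of conjugates of A), so |Γ₁| = [Γ : A]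
  have hUniv : (Set.univ : Set Γ) = (Γ₁ : Set Γ) ∪ U A := by
    ext x
    simp only [Set.mem_univ, true_iff, Set.mem_union]
    by_cases hx : x ∈ Γ₁
    · exact Or.inl hx
    · exact Or.inr (hcover x hx)
  have hn : Nat.card Γ = Nat.card Γ₁ + Nat.card (Γ ⧸ A) * (Nat.card A - 1) := by
    rw [← Set.ncard_univ, hUniv,
      Set.ncard_union_eq (hdisj₁ A hA𝒜 hAne) (Set.toFinite _) (Set.toFinite _),
      hm1, hcardUA]
  have e1 : Nat.card (Γ ⧸ A) * (Nat.card A - 1) + Nat.card (Γ ⧸ A) = Nat.card Γ := by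
    have h' : Nat.card A - 1 + 1 = Nat.card A := by omega
    calc Nat.card (Γ ⧸ A) * (Nat.card A - 1) + Nat.card (Γ ⧸ A)
        = Nat.card (Γ ⧸ A) * ((Nat.card A - 1) + 1) := by ring
      _ = Nat.card (Γ ⧸ A) * Nat.card A := by rw [h']
      _ = Nat.card Γ := hlagA
  have hmq : Nat.card Γ₁ = Nat.card (Γ ⧸ A) := by omega
  have hkey : Nat.card Γ₁ * Nat.card A = Nat.card Γ := by
    rw [hmq]; exact hlagA
  -- trivial intersection
  have hinter : Γ₁ ⊓ A = ⊥ := by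
    rw [eq_bot_iff]
    intro x hx
    rw [Subgroup.mem_inf] at hx
    rw [Subgroup.mem_bot]
    exact partition_eq_one' hF.partition hΓ₁P (hmemP A hA𝒜) (Ne.symm hAne) hx.1 hx.2
  refine ⟨A, hA𝒜, hinter, ?_⟩
  -- the multiplication map Γ₁ × A → Γ is injective
  have hmulinj : Function.Injective (fun p : Γ₁ × A => (p.1 : Γ) * (p.2 : Γ)) := by
    rintro ⟨⟨x, hx⟩, ⟨a, ha⟩⟩ ⟨⟨y, hy⟩, ⟨b, hb⟩⟩ h
    simp only at h
    have key : y⁻¹ * x = b * a⁻¹ := by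
      have : x = y * b * a⁻¹ := by rw [← h]; group
      rw [this]; group
    have h1 : y⁻¹ * x ∈ Γ₁ := Γ₁.mul_mem (Γ₁.inv_mem hy) hx
    have h2 : y⁻¹ * x ∈ A := key ▸ A.mul_mem hb (A.inv_mem ha)
    have h3 : y⁻¹ * x = 1 := by
      have := hinter ▸ Subgroup.mem_inf.2 ⟨h1, h2⟩
      simpa using this
    have hxy : y = x := inv_mul_eq_one.1 h3
    subst hxy
    have hab : a = b := by
      exact mul_left_cancel h
    subst hab
    rfl
  have hrange : Set.range (fun p : Γ₁ × A => (p.1 : Γ) * (p.2 : Γ))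
      = (Γ₁ : Set Γ) * (A : Set Γ) := by
    ext x
    constructor
    · rintro ⟨⟨y, z⟩, rfl⟩
      exact Set.mul_mem_mul y.2 z.2
    · rintro ⟨y, hy, z, hz, rfl⟩
      exact ⟨(⟨y, hy⟩, ⟨z, hz⟩), rfl⟩
  have hncard : ((Γ₁ : Set Γ) * (A : Set Γ)).ncard = Nat.card Γ := by
    rw [← hrange, ← Nat.card_coe_set_eq, Nat.card_range_of_injective hmulinj,
      Nat.card_prod, hkey]
  refine Set.eq_of_subset_of_ncard_le (Set.subset_univ _) ?_ Set.finite_univ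
  rw [Set.ncard_univ, hncard]
end

section
/- Let Γ be a group, V a finite type, F : SimpleGraph V an acyclic simple graph (a forest), and ψ : V → V → Γ a function satisfying ψ(u,w) = ψ(w,u)⁻¹ whenever u and w are adjacent in F. Then for every vertex v₀ ∈ V there exists a function η : V → Γ with η(v₀) = 1 such that η(u)⁻¹ · ψ(u,w) · η(w) = 1 for every pair of vertices u, w adjacent in F (i.e., the forest can be normalized by switching, with the switching function taking the identity value at v₀). -/
/-!
Root every component of the forest, at `v₀` for the component of `v₀`, and give each vertex the
gain of the unique path from its root. In a forest the paths to the two ends of an edge `u w`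
differ exactly by that edge, so this potential gets multiplied by `ψ u w` across it, and its
inverse is a switching function that makes every edge gain trivial.
-/

namespace SimpleGraph

variable {Γ V : Type*} [Group Γ] {F : SimpleGraph V}

def Walk.gain (ψ : V → V → Γ) {u v : V} (p : F.Walk u v) : Γ :=
  (p.darts.map fun d => ψ d.fst d.snd).prod

@[simp]
lemma Walk.gain_nil (ψ : V → V → Γ) {u : V} : (nil : F.Walk u u).gain ψ = 1 := rfl

@[simp]
lemma Walk.gain_concat (ψ : V → V → Γ) {u v w : V} (p : F.Walk u v) (h : F.Adj v w) :
    (p.concat h).gain ψ = p.gain ψ * ψ v w := by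
  simp [gain, darts_concat]

lemma IsAcyclic.gain_eq_mul_of_adj (hF : F.IsAcyclic) {ψ : V → V → Γ} {r u w : V}
    (hψ : ψ u w = (ψ w u)⁻¹) {p : F.Walk r u} {q : F.Walk r w} (hp : p.IsPath)
    (hq : q.IsPath) (hadj : F.Adj u w) : q.gain ψ = p.gain ψ * ψ u w := by
  by_cases hw : w ∈ p.support
  · rw [hF.path_concat hq hp hadj.symm hw, Walk.gain_concat, hψ, mul_inv_cancel_right]
  · rw [hF.path_concat hp hq hadj (hF.mem_support_of_ne_mem_support_of_adj_of_isPath hq hp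
      hadj.symm hw), Walk.gain_concat]

lemma IsAcyclic.exists_gain_potential (hF : F.IsAcyclic) {ψ : V → V → Γ}
    (hψ : ∀ u w, F.Adj u w → ψ u w = (ψ w u)⁻¹) (r : V) :
    ∃ g : V → Γ, g r = 1 ∧ ∀ u w, F.Reachable r u → F.Adj u w → g w = g u * ψ u w := by
  classical
  refine ⟨fun v => if h : F.Reachable r v then (h.some.toPath : F.Walk r v).gain ψ else 1,
    ?_, fun u w hu hadj => ?_⟩
  · simp [(hF.subsingleton_path r r).elim (Reachable.refl r).some.toPath Path.nil]
  · simp only [dif_pos hu, dif_pos (hu.trans hadj.reachable)]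
    exact hF.gain_eq_mul_of_adj (hψ u w hadj) (Path.isPath _) (Path.isPath _) hadj

lemma exists_section_connectedComponentMk (G : SimpleGraph V) (v : V) :
    ∃ s : G.ConnectedComponent → V,
      (∀ c, G.connectedComponentMk (s c) = c) ∧ s (G.connectedComponentMk v) = v := by
  classical
  refine ⟨Function.update (·.out) (G.connectedComponentMk v) v, fun c => ?_, by simp⟩
  rcases eq_or_ne c (G.connectedComponentMk v) with rfl | hc
  · simp
  · rw [Function.update_of_ne hc]
    exact Quot.out_eq c

end SimpleGraph

open SimpleGraph in
theorem normalize_forest_general {Γ V : Type*} [Group Γ]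
    (F : SimpleGraph V) (hF : F.IsAcyclic) (ψ : V → V → Γ)
    (hψ : ∀ u w : V, F.Adj u w → ψ u w = (ψ w u)⁻¹) (v₀ : V) :
    ∃ η : V → Γ, η v₀ = 1 ∧ ∀ u w : V, F.Adj u w → (η u)⁻¹ * ψ u w * η w = 1 := by
  obtain ⟨root, hroot, hroot_v₀⟩ := F.exists_section_connectedComponentMk v₀
  choose g hg_root hg_adj using fun c => hF.exists_gain_potential hψ (root c)
  refine ⟨fun v => (g (F.connectedComponentMk v) v)⁻¹, ?_, ?_⟩
  · rw [inv_eq_one, ← hg_root (F.connectedComponentMk v₀), hroot_v₀]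
  · intro u w hadj
    dsimp only
    have hreach : F.Reachable (root (F.connectedComponentMk u)) u :=
      ConnectedComponent.exact (hroot _)
    rw [ConnectedComponent.sound hadj.reachable] at hreach ⊢
    rw [hg_adj _ u w hreach hadj]
    group

/-- Any forest of a gain graph can be normalized by switching, with the switching
function taking the identity value at any prescribed vertex `v₀`. -/
theorem normalize_forest {Γ V : Type*} [Group Γ] [Finite V]
    (F : SimpleGraph V) (hF : F.IsAcyclic) (ψ : V → V → Γ)
    (hψ : ∀ u w : V, F.Adj u w → ψ u w = (ψ w u)⁻¹) (v₀ : V) :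
    ∃ η : V → Γ, η v₀ = 1 ∧ ∀ u w : V, F.Adj u w → (η u)⁻¹ * ψ u w * η w = 1 :=
  normalize_forest_general F hF ψ hψ v₀
end

section
/- With Γ = Γ₁ ⋊_φ C₂ the semidirect product of a commutative group Γ₁ with no elements of order 2 by the order-two group C₂ acting by inversion: for every a ∈ Γ₁, the two-element subgroup A_a = {(1,1), (a,t)} is malnormal in Γ. -/
/-- The cyclic group of order two, written multiplicatively. -/
abbrev C₂ := Multiplicative (ZMod 2)

/-- The generator of `C₂`. -/
def t : C₂ := Multiplicative.ofAdd 1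

/-- The two-element subgroup `{1, x}` generated by a self-inverse element `x`. -/
def pairSubgroup {G : Type*} [Group G] (x : G) (hx : x * x = 1) : Subgroup G where
  carrier := {1, x}
  one_mem' := Or.inl rfl
  mul_mem' := by
    intro a b ha hb
    simp only [Set.mem_insert_iff, Set.mem_singleton_iff] at *
    rcases ha with rfl | rfl <;> rcases hb with rfl | rfl <;> simp [hx]
  inv_mem' := by
    intro a ha
    simp only [Set.mem_insert_iff, Set.mem_singleton_iff] at *
    rcases ha with rfl | rfl
    · exact Or.inl inv_one
    · exact Or.inr (inv_eq_of_mul_eq_one_right hx)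

lemma gen_mul_self {Γ₁ : Type*} [CommGroup Γ₁] (φ : C₂ →* MulAut Γ₁)
    (hφ : ∀ a : Γ₁, φ t a = a⁻¹) (a : Γ₁) :
    (⟨a, t⟩ : Γ₁ ⋊[φ] C₂) * ⟨a, t⟩ = 1 := by
  ext
  · simp [hφ]
  · show t * t = 1
    decide

/-- The two-element subgroup `{(1,1), (a,t)}` of `Γ₁ ⋊[φ] C₂`. -/
def A_ {Γ₁ : Type*} [CommGroup Γ₁] (φ : C₂ →* MulAut Γ₁)
    (hφ : ∀ a : Γ₁, φ t a = a⁻¹) (a : Γ₁) : Subgroup (Γ₁ ⋊[φ] C₂) :=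
  pairSubgroup (⟨a, t⟩ : Γ₁ ⋊[φ] C₂) (gen_mul_self φ hφ a)

/-- In `Γ = Γ₁ ⋊[φ] C₂`, with `Γ₁` commutative without elements of order 2 and `C₂` acting by
inversion, each two-element subgroup `A_a = {(1,1), (a,t)}` is malnormal. -/
theorem A_malnormal {Γ₁ : Type*} [CommGroup Γ₁]
    (h2 : ∀ a : Γ₁, a * a = 1 → a = 1)
    (φ : C₂ →* MulAut Γ₁) (hφ : ∀ a : Γ₁, φ t a = a⁻¹) (a : Γ₁) :
    Malnormal (A_ φ hφ a) := by
  have hC2 : ∀ s : C₂, s = 1 ∨ s = t := by decide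
  have hmem : ∀ x : Γ₁ ⋊[φ] C₂, x ∈ A_ φ hφ a ↔ x = 1 ∨ x = ⟨a, t⟩ := by
    intro x
    simp [A_, pairSubgroup, Subgroup.mem_mk, Set.mem_insert_iff]
  -- key: anything commuting with ⟨a,t⟩ lies in A_
  have key : ∀ g : Γ₁ ⋊[φ] C₂, (⟨a, t⟩ : Γ₁ ⋊[φ] C₂) * g = g * ⟨a, t⟩ →
      g ∈ A_ φ hφ a := by
    intro g hc
    obtain ⟨b, s⟩ := g
    rw [hmem]
    rw [SemidirectProduct.ext_iff] at hc
    obtain ⟨h1, _⟩ := hc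
    simp only [SemidirectProduct.mul_left, hφ] at h1
    -- h1 : a * b⁻¹ = b * φ s a
    rcases hC2 s with rfl | rfl
    · rw [map_one φ] at h1
      simp only [MulAut.one_apply] at h1
      -- h1 : a * b⁻¹ = b * a
      have hb' : b⁻¹ = b := by
        rw [mul_comm b a] at h1
        exact mul_left_cancel h1
      have hb : b = 1 := h2 b (by nth_rewrite 1 [← hb']; exact inv_mul_cancel b)
      left
      subst hb
      rfl
    · simp only [hφ] at h1
      -- h1 : a * b⁻¹ = b * a⁻¹
      have h0 : (a * b⁻¹) * (a * b⁻¹) = 1 := by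
        nth_rewrite 2 [h1]
        group
      have hab : a = b := by
        have := h2 _ h0
        exact (mul_inv_eq_one).mp this
      right
      subst hab
      rfl
  intro g hg
  rw [eq_bot_iff]
  intro x hx
  rw [Subgroup.mem_inf] at hx
  obtain ⟨hxA, hxC⟩ := hx
  rw [hmem] at hxA
  rcases hxA with rfl | rfl
  · exact Subgroup.mem_bot.mpr rfl
  · exfalso
    obtain ⟨y, hy, hconj⟩ := hxC
    rw [SetLike.mem_coe, hmem] at hy
    rcases hy with rfl | rfl
    · rw [map_one] at hconj
      have : (1 : C₂) = t := congrArg SemidirectProduct.right hconj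
      exact absurd this (by decide)
    · apply hg
      apply key
      simp only [MulEquiv.toMonoidHom_eq_coe, MonoidHom.coe_coe, MulAut.conj_apply,
        inv_inv] at hconj
      calc (⟨a, t⟩ : Γ₁ ⋊[φ] C₂) * g = g * (g⁻¹ * ⟨a, t⟩ * g) := by group
        _ = g * ⟨a, t⟩ := by rw [hconj]
end

section
/- With Γ = Γ₁ ⋊_φ C₂ the semidirect product of a commutative group Γ₁ with no elements of order 2 by the order-two group C₂ acting by inversion: every non-identity element of Γ lies in exactly one subgroup in the family consisting of the embedded copy of Γ₁ (the subgroup {(x,1) : x ∈ Γ₁}) together with the subgroups A_a for a ∈ Γ₁; i.e., this family is a partition of Γ. -/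
lemma mem_A_iff {Γ₁ : Type*} [CommGroup Γ₁] (φ : C₂ →* MulAut Γ₁)
    (hφ : ∀ a : Γ₁, φ t a = a⁻¹) (a : Γ₁) (x : Γ₁ ⋊[φ] C₂) :
    x ∈ A_ φ hφ a ↔ x = 1 ∨ x = ⟨a, t⟩ := Iff.rfl

lemma C₂_cases (c : C₂) : c = 1 ∨ c = t := by revert c; decide

/-- In `Γ = Γ₁ ⋊[φ] C₂`, with `Γ₁` commutative without elements of order 2 and `C₂` acting by
inversion, the embedded copy of `Γ₁` together with the subgroups `A_a = {(1,1), (a,t)}`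
for `a ∈ Γ₁` form a partition of `Γ`. -/
theorem partition_of_inverted_abelian {Γ₁ : Type*} [CommGroup Γ₁]
    (h2 : ∀ a : Γ₁, a * a = 1 → a = 1)
    (φ : C₂ →* MulAut Γ₁) (hφ : ∀ a : Γ₁, φ t a = a⁻¹) :
    IsGroupPartition
      (insert (SemidirectProduct.inl : Γ₁ →* Γ₁ ⋊[φ] C₂).range
        {S : Subgroup (Γ₁ ⋊[φ] C₂) | ∃ a : Γ₁, S = A_ φ hφ a}) := by
  intro x hx
  obtain ⟨a, c⟩ := x
  have h1t : (1 : C₂) ≠ t := by decide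
  rcases C₂_cases c with rfl | rfl
  · refine ⟨_, ⟨Or.inl rfl, ⟨a, ?_⟩⟩, ?_⟩
    · ext <;> simp
    · rintro B ⟨hB | ⟨b, rfl⟩, hmem⟩
      · exact hB
      · rcases (mem_A_iff φ hφ b _).1 hmem with h | h
        · exact absurd h hx
        · exact absurd (congrArg SemidirectProduct.right h) h1t
  · refine ⟨A_ φ hφ a, ⟨Or.inr ⟨a, rfl⟩, Or.inr rfl⟩, ?_⟩
    rintro B ⟨hB | ⟨b, rfl⟩, hmem⟩
    · subst hB
      obtain ⟨g, hg⟩ := hmem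
      exact absurd (congrArg SemidirectProduct.right hg) (by simpa using h1t)
    · rcases (mem_A_iff φ hφ b _).1 hmem with h | h
      · exact absurd h hx
      · have : a = b := congrArg SemidirectProduct.left h
        rw [← this]
end

section
/- With Γ = Γ₁ ⋊_φ C₂ the semidirect product of a commutative group Γ₁ with no elements of order 2 by the order-two group C₂ acting by inversion: for a, b ∈ Γ₁, the subgroups A_a and A_b are conjugate in Γ if and only if there exists c ∈ Γ₁ with a·b⁻¹ = c² or a·b = c². -/
lemma mem_pairSubgroup {G : Type*} [Group G] (x : G) (hx : x * x = 1) (y : G) :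
    y ∈ pairSubgroup x hx ↔ y = 1 ∨ y = x := by
  show y ∈ ({1, x} : Set G) ↔ _
  simp [Set.mem_insert_iff]

lemma pairSubgroup_congr {G : Type*} [Group G] (x y : G) (hx : x * x = 1) (hy : y * y = 1)
    (h : x = y) : pairSubgroup x hx = pairSubgroup y hy := by subst h; rfl

lemma conj_self_inv {G : Type*} [Group G] (g x : G) (hx : x * x = 1) :
    (g⁻¹ * x * g) * (g⁻¹ * x * g) = 1 := by
  rw [show g⁻¹*x*g*(g⁻¹*x*g) = g⁻¹*(x*x)*g by group, hx]; group

lemma conjSubgroup_pair {G : Type*} [Group G] (g x : G) (hx : x * x = 1) :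
    ConjSubgroup g (pairSubgroup x hx) =
      pairSubgroup (g⁻¹ * x * g) (conj_self_inv g x hx) := by
  ext y
  simp only [ConjSubgroup, Subgroup.mem_map, mem_pairSubgroup, MulEquiv.coe_toMonoidHom,
    MulAut.conj_apply, MulAut.conj_inv_apply]
  constructor
  · rintro ⟨z, (rfl | rfl), rfl⟩
    · left; simp
    · right; simp
  · rintro (rfl | rfl)
    · exact ⟨1, Or.inl rfl, by simp⟩
    · exact ⟨x, Or.inr rfl, by simp⟩

lemma t_cases (s : C₂) : s = 1 ∨ s = t := by revert s; decide

lemma t_ne_one : t ≠ (1 : C₂) := by decide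

lemma conj_formula_one {Γ₁ : Type*} [CommGroup Γ₁] (φ : C₂ →* MulAut Γ₁)
    (hφ : ∀ a : Γ₁, φ t a = a⁻¹) (a c : Γ₁) :
    (⟨c, 1⟩ : Γ₁ ⋊[φ] C₂)⁻¹ * ⟨a, t⟩ * ⟨c, 1⟩ = ⟨a * (c⁻¹) ^ 2, t⟩ := by
  ext
  · simp [hφ, pow_two, mul_comm, mul_left_comm]
  · show 1⁻¹ * t * 1 = t; group

lemma conj_formula_t {Γ₁ : Type*} [CommGroup Γ₁] (φ : C₂ →* MulAut Γ₁)
    (hφ : ∀ a : Γ₁, φ t a = a⁻¹) (a c : Γ₁) :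
    (⟨c, t⟩ : Γ₁ ⋊[φ] C₂)⁻¹ * ⟨a, t⟩ * ⟨c, t⟩ = ⟨a⁻¹ * c ^ 2, t⟩ := by
  have ht : (t : C₂)⁻¹ = t := by decide
  ext
  · simp [ht, hφ, pow_two, mul_comm, mul_left_comm, mul_assoc]
  · show t⁻¹ * t * t = t
    rw [ht]; show t * t * t = t
    decide

/-- In `Γ = Γ₁ ⋊[φ] C₂`, with `Γ₁` commutative without elements of order 2 and `C₂` acting by
inversion, the subgroups `A_a` and `A_b` are conjugate in `Γ` if and only if there is a
`c ∈ Γ₁` with `a * b⁻¹ = c ^ 2` or `a * b = c ^ 2`. -/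
theorem A_conjugate_iff {Γ₁ : Type*} [CommGroup Γ₁]
    (h2 : ∀ a : Γ₁, a * a = 1 → a = 1)
    (φ : C₂ →* MulAut Γ₁) (hφ : ∀ a : Γ₁, φ t a = a⁻¹) (a b : Γ₁) :
    (∃ g : Γ₁ ⋊[φ] C₂, A_ φ hφ b = ConjSubgroup g (A_ φ hφ a)) ↔
      ∃ c : Γ₁, a * b⁻¹ = c ^ 2 ∨ a * b = c ^ 2 := by
  constructor
  · rintro ⟨g, hg⟩
    rw [show A_ φ hφ a = pairSubgroup ⟨a, t⟩ (gen_mul_self φ hφ a) from rfl,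
      conjSubgroup_pair] at hg
    have hb : (⟨b, t⟩ : Γ₁ ⋊[φ] C₂) ∈ pairSubgroup _ (conj_self_inv g ⟨a, t⟩ (gen_mul_self φ hφ a)) := by
      rw [← hg, A_, mem_pairSubgroup]; exact Or.inr rfl
    rw [mem_pairSubgroup] at hb
    rcases hb with hb | hb
    · exact absurd (congrArg SemidirectProduct.right hb) t_ne_one
    · obtain ⟨c, s⟩ := g
      rcases t_cases s with rfl | rfl
      · refine ⟨c, Or.inl ?_⟩
        rw [conj_formula_one φ hφ] at hb
        have := congrArg SemidirectProduct.left hb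
        simp only at this
        rw [this, mul_comm]; group
      · refine ⟨c, Or.inr ?_⟩
        rw [conj_formula_t φ hφ] at hb
        have := congrArg SemidirectProduct.left hb
        simp only at this
        rw [this]; group
  · rintro ⟨c, hc | hc⟩
    · refine ⟨⟨c, 1⟩, ?_⟩
      rw [show A_ φ hφ a = pairSubgroup ⟨a, t⟩ (gen_mul_self φ hφ a) from rfl,
        conjSubgroup_pair]
      apply pairSubgroup_congr
      rw [conj_formula_one φ hφ]
      have hb : b = a * (c⁻¹) ^ 2 := by
        have h1 : b = (a * b⁻¹)⁻¹ * a := by group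
        rw [h1, hc, mul_comm]; group
      rw [hb]
    · refine ⟨⟨c, t⟩, ?_⟩
      rw [show A_ φ hφ a = pairSubgroup ⟨a, t⟩ (gen_mul_self φ hφ a) from rfl,
        conjSubgroup_pair]
      apply pairSubgroup_congr
      rw [conj_formula_t φ hφ]
      have hb : b = a⁻¹ * c ^ 2 := by rw [← hc]; group
      rw [hb]
end
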